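/- Let the group SU(2)×SU(2) be embedded block-diagonally in GL(4,ℂ) by (A,B) ↦ diag(A,B). Then (i) the subspace of traceless 4×4 complex matrices X with diag(A,B)·X·diag(A,B)⁻¹ = X for all A, B ∈ SU(2) is the one-dimensional span ℂ·diag(1,1,−1,−1); and (ii) for the matrix g′ ∈ U(4) determined by g′e₁ = e₃, g′e₂ = −e₄, g′e₃ = e₁, g′e₄ = e₂, one has g′·diag(1,1,−1,−1)·(g′)⁻¹ = −diag(1,1,−1,−1). -/

import Mathlib

/-! A matrix commuting with the torus elements diag(i, −i, 1, 1) and diag(1, 1, i, −i) of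
SU(2) × SU(2) is diagonal, because the eigenvalue pairs (i, 1), (−i, 1), (1, i), (1, −i) are
distinct. The Weyl element [[0, 1], [−1, 0]] in each factor then identifies the two entries of
each block, and the trace condition leaves diag(a, a, −a, −a). Conversely diag(a, a, b, b)
commutes with every block-diagonal matrix, and g′ exchanges the two blocks, so it anticommutes
with diag(1, 1, −1, −1).
-/

noncomputable section

abbrev Mat2 : Type := Matrix (Fin 2) (Fin 2) ℂ

/-- The special unitary group SU(2), as a set of matrices. -/
def SU2 : Set Mat2 := {A | A * A.conjTranspose = 1 ∧ A.det = 1}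

/-- The block-diagonal matrix diag(A, B) ∈ U(4). -/
def bd4 (A B : Mat2) : Matrix (Fin 4) (Fin 4) ℂ :=
  !![A 0 0, A 0 1, 0, 0;
     A 1 0, A 1 1, 0, 0;
     0, 0, B 0 0, B 0 1;
     0, 0, B 1 0, B 1 1]

/-- g′ ∈ U(4): g′e₁ = e₃, g′e₂ = −e₄, g′e₃ = e₁, g′e₄ = e₂. -/
def g4 : Matrix (Fin 4) (Fin 4) ℂ :=
  !![0, 0, 1, 0;
     0, 0, 0, 1;
     1, 0, 0, 0;
     0, -1, 0, 0]

open Matrix ComplexConjugate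

namespace Matrix

variable {n α : Type*} [Fintype n] [DecidableEq n]

theorem mul_mul_inv_eq_iff [CommRing α] {U X Y : Matrix n n α} (hU : IsUnit U) :
    U * X * U⁻¹ = Y ↔ U * X = Y * U :=
  letI := hU.invertible
  mul_inv_eq_iff_eq_mul_of_invertible U _ _

theorem apply_eq_of_commute_diagonal [CommRing α] [IsDomain α] {d : n → α} {M : Matrix n n α}
    (h : Commute (diagonal d) M) {i j : n} (hM : M i j ≠ 0) : d i = d j := by
  have hij : d i * M i j = M i j * d j := by
    simpa only [diagonal_mul, mul_diagonal] using congr_fun (congr_fun h.eq i) j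
  exact mul_right_cancel₀ hM (hij.trans (mul_comm _ _))

end Matrix

theorem bd4_mul (A B C D : Mat2) : bd4 A B * bd4 C D = bd4 (A * C) (B * D) := by
  ext i j
  fin_cases i <;> fin_cases j <;> simp [bd4, mul_apply, Fin.sum_univ_four, Fin.sum_univ_two]

theorem bd4_one : bd4 1 1 = 1 := by
  ext i j
  fin_cases i <;> fin_cases j <;> simp [bd4, one_apply]

theorem bd4_diagonal (a b c d : ℂ) :
    bd4 (diagonal ![a, b]) (diagonal ![c, d]) = diagonal ![a, b, c, d] := by
  ext i j
  fin_cases i <;> fin_cases j <;> simp [bd4]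

theorem isUnit_bd4 {A B : Mat2} (hA : IsUnit A) (hB : IsUnit B) : IsUnit (bd4 A B) := by
  obtain ⟨A', hA'⟩ := hA.exists_right_inv
  obtain ⟨B', hB'⟩ := hB.exists_right_inv
  exact IsUnit.of_mul_eq_one (bd4 A' B') (by rw [bd4_mul, hA', hB', bd4_one])

theorem commute_bd4_diagonal (A B : Mat2) (a b : ℂ) :
    Commute (bd4 A B) (diagonal ![a, a, b, b]) := by
  ext i j
  fin_cases i <;> fin_cases j <;> simp [bd4, mul_comm]

theorem isUnit_of_mem_SU2 {A : Mat2} (hA : A ∈ SU2) : IsUnit A :=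
  IsUnit.of_mul_eq_one _ hA.1

theorem conj_bd4_eq_iff {A B : Mat2} (hA : A ∈ SU2) (hB : B ∈ SU2)
    (X : Matrix (Fin 4) (Fin 4) ℂ) :
    bd4 A B * X * (bd4 A B)⁻¹ = X ↔ Commute (bd4 A B) X :=
  mul_mul_inv_eq_iff (isUnit_bd4 (isUnit_of_mem_SU2 hA) (isUnit_of_mem_SU2 hB))

theorem one_mem_SU2 : (1 : Mat2) ∈ SU2 := by
  simp [SU2]

theorem diagonal_mem_SU2 {z : ℂ} (hz : Complex.normSq z = 1) : diagonal ![z, conj z] ∈ SU2 := by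
  have hz' : z * conj z = 1 := by rw [Complex.mul_conj, hz, Complex.ofReal_one]
  refine ⟨?_, by simpa [det_fin_two] using hz'⟩
  ext i j
  fin_cases i <;> fin_cases j <;> simp [hz', mul_comm]

theorem weyl_mem_SU2 : !![0, 1; -1, 0] ∈ SU2 := by
  refine ⟨?_, by simp [det_fin_two]⟩
  ext i j
  fin_cases i <;> fin_cases j <;> simp [mul_apply, Fin.sum_univ_two]

theorem isUnit_g4 : IsUnit g4 :=
  IsUnit.of_mul_eq_one g4ᵀ (by
    ext i j
    fin_cases i <;> fin_cases j <;> simp [g4, mul_apply, Fin.sum_univ_four])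

theorem g4_mul_diagonal :
    g4 * diagonal ![1, 1, -1, -1] = -diagonal ![1, 1, -1, -1] * g4 := by
  ext i j
  fin_cases i <;> fin_cases j <;> simp [g4]

theorem eq_diagonal_of_commute_bd4 {X : Matrix (Fin 4) (Fin 4) ℂ}
    (h : ∀ A ∈ SU2, ∀ B ∈ SU2, Commute (bd4 A B) X) : X = diagonal X.diag := by
  have hI := diagonal_mem_SU2 Complex.normSq_I
  have h1 := diagonal_mem_SU2 Complex.normSq_one
  have h₁ := h _ hI _ h1
  have h₂ := h _ h1 _ hI
  rw [bd4_diagonal] at h₁ h₂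
  ext i j
  by_cases hij : i = j
  · simp [hij]
  · rw [diagonal_apply_ne _ hij]
    by_contra hX
    have e₁ := apply_eq_of_commute_diagonal h₁ hX
    have e₂ := apply_eq_of_commute_diagonal h₂ hX
    revert hij e₁ e₂
    fin_cases i <;> fin_cases j <;> norm_num [Complex.ext_iff]

theorem apply_eq_of_commute_bd4_diagonal {x : Fin 4 → ℂ}
    (h : ∀ A ∈ SU2, ∀ B ∈ SU2, Commute (bd4 A B) (diagonal x)) : x 0 = x 1 ∧ x 2 = x 3 :=
  ⟨apply_eq_of_commute_diagonal (h _ weyl_mem_SU2 _ one_mem_SU2).symm (i := 0) (j := 1)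
      (by simp [bd4]),
    apply_eq_of_commute_diagonal (h _ one_mem_SU2 _ weyl_mem_SU2).symm (i := 2) (j := 3)
      (by simp [bd4])⟩

theorem diagonal_eq_smul {x : Fin 4 → ℂ} (h₀₁ : x 0 = x 1) (h₂₃ : x 2 = x 3)
    (htr : ∑ i, x i = 0) : diagonal x = x 0 • diagonal ![1, 1, -1, -1] := by
  rw [Fin.sum_univ_four] at htr
  have h₂ : x 2 = -x 0 := by linear_combination (htr + h₀₁ + h₂₃) / 2
  rw [← diagonal_smul]
  congr 1
  ext i
  fin_cases i <;> simp [← h₀₁, ← h₂₃, h₂]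

theorem statement11 :
    ({X : Matrix (Fin 4) (Fin 4) ℂ | X.trace = 0 ∧
        ∀ A B : Mat2, A ∈ SU2 → B ∈ SU2 → bd4 A B * X * (bd4 A B)⁻¹ = X}
      = Set.range (fun c : ℂ => c • Matrix.diagonal ![1, 1, -1, -1])) ∧
    g4 * Matrix.diagonal ![1, 1, -1, -1] * g4⁻¹ = -Matrix.diagonal ![1, 1, -1, -1] := by
  refine ⟨Set.ext fun X => ⟨fun ⟨htr, hX⟩ => ?_, ?_⟩,
    (mul_mul_inv_eq_iff isUnit_g4).mpr g4_mul_diagonal⟩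
  · have hcomm : ∀ A ∈ SU2, ∀ B ∈ SU2, Commute (bd4 A B) X := fun A hA B hB =>
      (conj_bd4_eq_iff hA hB X).mp (hX A B hA hB)
    obtain ⟨x, rfl⟩ : ∃ x, X = diagonal x := ⟨_, eq_diagonal_of_commute_bd4 hcomm⟩
    obtain ⟨h₀₁, h₂₃⟩ := apply_eq_of_commute_bd4_diagonal hcomm
    exact ⟨x 0, (diagonal_eq_smul h₀₁ h₂₃ (by rwa [trace_diagonal] at htr)).symm⟩
  · rintro ⟨c, rfl⟩
    have hc : c • diagonal ![1, 1, -1, -1] = diagonal ![c, c, -c, -c] := by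
      rw [← diagonal_smul]
      simp
    dsimp only
    rw [hc]
    exact ⟨by simp [trace, Fin.sum_univ_four], fun A B hA hB =>
      (conj_bd4_eq_iff hA hB _).mpr (commute_bd4_diagonal A B c (-c))⟩

end
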